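/- arXiv:1712.03793 — 2 statements merged into one kernel-verified Lean document; each statement's English description precedes it below -/
import Mathlib

section
/- For a > b > 0, the function h*(t) = −arctan((t⁻¹ + a − b)/(t⁻¹ + a + b)) is concave on (0, ∞); its second derivative equals −8b(a + t(a² + b²)) / ((1 + t(a − b))² + (1 + t(a + b))²)² ≤ 0 for all t > 0. -/
/-!
For `t ≠ 0`, multiplying numerator and denominator by `t` turns `h*` into
`-arctan (u / v)` with the affine functions `u t = 1 + t (a - b)`, `v t = 1 + t (a + b)`.
Since `u' v - u v' = -2b` is constant, `h*' = 2b / (u² + v²)`, a rational function that is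
differentiated once more directly.
-/

open Set Real Filter Topology

theorem hasDerivAt_arctan_div {u v : ℝ → ℝ} {u' v' x : ℝ} (hu : HasDerivAt u u' x)
    (hv : HasDerivAt v v' x) (hx : v x ≠ 0) :
    HasDerivAt (fun y => arctan (u y / v y)) ((u' * v x - u x * v') / (u x ^ 2 + v x ^ 2)) x := by
  refine (hu.div hv hx).arctan.congr_deriv ?_
  rw [Pi.div_apply]
  field_simp
  ring

noncomputable def hStar (a b t : ℝ) : ℝ :=
  -arctan ((t⁻¹ + a - b) / (t⁻¹ + a + b))

theorem hasDerivAt_one_add_mul (c t : ℝ) : HasDerivAt (fun s => 1 + s * c) c t := by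
  simpa using ((hasDerivAt_id t).mul_const c).const_add 1

section

variable {a b t : ℝ}

theorem hStar_eq (ht : t ≠ 0) :
    hStar a b t = -arctan ((1 + t * (a - b)) / (1 + t * (a + b))) := by
  rw [hStar, ← mul_div_mul_left _ _ ht]
  congr 2
  field_simp
  ring

theorem hasDerivAt_hStar (hab : 0 ≤ a + b) (ht : 0 < t) :
    HasDerivAt (hStar a b) (2 * b / ((1 + t * (a - b)) ^ 2 + (1 + t * (a + b)) ^ 2)) t := by
  have hu := hasDerivAt_one_add_mul (a - b) t
  have hv := hasDerivAt_one_add_mul (a + b) t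
  have hvt : 1 + t * (a + b) ≠ 0 := by positivity
  have hEq : hStar a b =ᶠ[𝓝 t] fun s => -arctan ((1 + s * (a - b)) / (1 + s * (a + b))) := by
    filter_upwards [Ioi_mem_nhds ht] with s hs
    exact hStar_eq hs.ne'
  refine ((hasDerivAt_arctan_div hu hv hvt).neg.congr_of_eventuallyEq hEq).congr_deriv ?_
  rw [← neg_div]
  ring

theorem one_add_mul_sq_add_sq_pos (hb : b ≠ 0) (t : ℝ) :
    0 < (1 + t * (a - b)) ^ 2 + (1 + t * (a + b)) ^ 2 := by
  have hsplit : (1 + t * (a - b)) ^ 2 + (1 + t * (a + b)) ^ 2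
      = 2 * (1 + t * a) ^ 2 + 2 * (t * b) ^ 2 := by ring
  rw [hsplit]
  rcases eq_or_ne t 0 with rfl | ht
  · norm_num
  · have : 0 < (t * b) ^ 2 := by positivity
    positivity

theorem hasDerivAt_two_mul_div_sq_add_sq (hb : b ≠ 0) (t : ℝ) :
    HasDerivAt (fun s => 2 * b / ((1 + s * (a - b)) ^ 2 + (1 + s * (a + b)) ^ 2))
      (-8 * b * (a + t * (a ^ 2 + b ^ 2)) /
        ((1 + t * (a - b)) ^ 2 + (1 + t * (a + b)) ^ 2) ^ 2) t := by
  have hu := hasDerivAt_one_add_mul (a - b) t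
  have hv := hasDerivAt_one_add_mul (a + b) t
  have hD : HasDerivAt (fun s => (1 + s * (a - b)) ^ 2 + (1 + s * (a + b)) ^ 2)
      (2 * (1 + t * (a - b)) * (a - b) + 2 * (1 + t * (a + b)) * (a + b)) t :=
    ((hu.pow 2).add (hv.pow 2)).congr_deriv (by ring)
  refine ((hasDerivAt_const t (2 * b)).div hD (one_add_mul_sq_add_sq_pos hb t).ne').congr_deriv ?_
  ring

theorem hasDerivAt_deriv_hStar (hab : 0 ≤ a + b) (hb : b ≠ 0) (ht : 0 < t) :
    HasDerivAt (deriv (hStar a b))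
      (-8 * b * (a + t * (a ^ 2 + b ^ 2)) /
        ((1 + t * (a - b)) ^ 2 + (1 + t * (a + b)) ^ 2) ^ 2) t := by
  refine (hasDerivAt_two_mul_div_sq_add_sq hb t).congr_of_eventuallyEq ?_
  filter_upwards [Ioi_mem_nhds ht] with s hs
  exact (hasDerivAt_hStar hab hs).deriv

theorem hStar_second_deriv_expr_nonpos (ha : 0 ≤ a) (hb : 0 ≤ b) (ht : 0 ≤ t) :
    -8 * b * (a + t * (a ^ 2 + b ^ 2)) /
      ((1 + t * (a - b)) ^ 2 + (1 + t * (a + b)) ^ 2) ^ 2 ≤ 0 :=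
  div_nonpos_of_nonpos_of_nonneg
    (mul_nonpos_of_nonpos_of_nonneg (by linarith) (by positivity)) (by positivity)

end

theorem stmt_9 (a b : ℝ) (hab : a > b) (hb : 0 < b) :
    ConcaveOn ℝ (Set.Ioi 0)
      (fun t : ℝ => -Real.arctan ((t⁻¹ + a - b) / (t⁻¹ + a + b))) ∧
    ∀ t : ℝ, 0 < t →
      deriv (deriv (fun t : ℝ => -Real.arctan ((t⁻¹ + a - b) / (t⁻¹ + a + b)))) t =
        -8 * b * (a + t * (a ^ 2 + b ^ 2)) /
          ((1 + t * (a - b)) ^ 2 + (1 + t * (a + b)) ^ 2) ^ 2 ∧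
      -8 * b * (a + t * (a ^ 2 + b ^ 2)) /
          ((1 + t * (a - b)) ^ 2 + (1 + t * (a + b)) ^ 2) ^ 2 ≤ 0 := by
  have ha : 0 ≤ a := (hb.trans hab).le
  have hab' : 0 ≤ a + b := by linarith
  have h1 := fun t (ht : t ∈ Ioi (0 : ℝ)) => hasDerivAt_hStar hab' ht
  have h2 := fun t (ht : t ∈ Ioi (0 : ℝ)) => hasDerivAt_deriv_hStar hab' hb.ne' ht
  change ConcaveOn ℝ (Ioi 0) (hStar a b) ∧ ∀ t : ℝ, 0 < t → deriv (deriv (hStar a b)) t = _ ∧ _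
  refine ⟨concaveOn_of_deriv2_nonpos' (convex_Ioi 0)
    (fun t ht => (h1 t ht).differentiableAt.differentiableWithinAt)
    (fun t ht => (h2 t ht).differentiableAt.differentiableWithinAt) fun t ht => ?_,
    fun t ht => ⟨(h2 t ht).deriv, hStar_second_deriv_expr_nonpos ha hb.le ht.le⟩⟩
  rw [Function.iterate_succ_apply, Function.iterate_one, (h2 t ht).deriv]
  exact hStar_second_deriv_expr_nonpos ha hb.le ht.le
end

section
/- For a > b > 0, the map from positive definite symmetric matrices given by F(A) = ∑ᵢ ln((λᵢ(A) + a − b)/(λᵢ(A) + a + b)) (λᵢ(A) the eigenvalues of A) satisfies F(A) = ln det((A + (a−b)I)(A + (a+b)I)⁻¹), and F is monotone: if A ≤ B (B − A positive semidefinite, both positive definite), then F(A) ≤ F(B). -/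
/-!
On the spectrum, `F` is the sum of `log` of `g t = (t + a - b) / (t + a + b)`, so `F A` is the
`log det` of `g A = (A + (a - b)) (A + (a + b))⁻¹` by the functional calculus. Writing
`g A = 1 - 2b (A + (a + b))⁻¹`, monotonicity of `F` reduces to two facts about the Loewner order:
inversion is antitone and `det` is monotone on positive definite matrices (`g A` is positive
definite since `g A ≥ g 0 = ((a - b) / (a + b)) • 1`). Both follow by
writing `X = S* S` and `Y = S* C S` with `1 ≤ C`, where they become `C⁻¹ ≤ 1` and `1 ≤ det C`,
i.e. statements about the eigenvalues of `C`.
-/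

open Matrix
open scoped MatrixOrder ComplexOrder

namespace Matrix

variable {ι 𝕜 : Type*} [Fintype ι] [DecidableEq ι] [RCLike 𝕜]

lemma one_le_det_of_one_le {C : Matrix ι ι 𝕜} (hC : 1 ≤ C) : 1 ≤ C.det := by
  have hCh : C.IsHermitian := by simpa using hC.isHermitian.add isHermitian_one
  have heig : ∀ i, 1 ≤ hCh.eigenvalues i := fun i =>
    (CFC.one_le_iff C hCh.isSelfAdjoint).mp hC _ (hCh.eigenvalues_mem_spectrum_real i)
  rw [hCh.det_eq_prod_eigenvalues, ← RCLike.ofReal_prod, ← RCLike.ofReal_one,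
    RCLike.ofReal_le_ofReal]
  exact Finset.one_le_prod fun i _ => heig i

lemma inv_le_one_of_one_le {C : Matrix ι ι 𝕜} (hC : 1 ≤ C) : C⁻¹ ≤ 1 := by
  have hCh : C.IsHermitian := by simpa using hC.isHermitian.add isHermitian_one
  have hdet : IsUnit C.det := (one_pos.trans_le (one_le_det_of_one_le hC)).ne'.isUnit
  lift C to (Matrix ι ι 𝕜)ˣ using (isUnit_iff_isUnit_det C).mpr hdet
  rw [← coe_units_inv, CFC.le_one_iff (R := ℝ) _ (coe_units_inv C ▸ hCh.inv.isSelfAdjoint),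
    ← spectrum.map_inv]
  intro x hx
  simpa using inv_le_one_of_one_le₀
    ((CFC.one_le_iff _ hCh.isSelfAdjoint).mp hC _ (Set.mem_inv.mp hx))

lemma PosDef.exists_eq_conj_of_le {X Y : Matrix ι ι 𝕜} (hX : X.PosDef) (hXY : X ≤ Y) :
    ∃ S C : Matrix ι ι 𝕜, IsUnit S ∧ X = star S * S ∧ Y = star S * C * S ∧ 1 ≤ C := by
  obtain ⟨S, hS, rfl⟩ :=
    CStarAlgebra.isStrictlyPositive_iff_eq_star_mul_self.mp hX.isStrictlyPositive
  have hST : S * S⁻¹ = 1 := mul_nonsing_inv S ((isUnit_iff_isUnit_det S).mp hS)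
  have hTS : S⁻¹ * S = 1 := nonsing_inv_mul S ((isUnit_iff_isUnit_det S).mp hS)
  refine ⟨S, star S⁻¹ * Y * S⁻¹, hS, rfl, ?_, ?_⟩
  · simp only [← mul_assoc, ← star_mul, hTS, star_one, one_mul]
    rw [mul_assoc, hTS, mul_one]
  · simpa [← mul_assoc, ← star_mul, hST] using star_left_conjugate_le_conjugate hXY S⁻¹

lemma PosDef.det_le_det {X Y : Matrix ι ι 𝕜} (hX : X.PosDef) (hXY : X ≤ Y) : X.det ≤ Y.det := by
  obtain ⟨S, C, -, rfl, rfl, hC⟩ := hX.exists_eq_conj_of_le hXY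
  simpa [det_mul, star_eq_conjTranspose, det_conjTranspose] using
    star_left_conjugate_le_conjugate (one_le_det_of_one_le hC) S.det

lemma PosDef.inv_le_inv {X Y : Matrix ι ι 𝕜} (hX : X.PosDef) (hXY : X ≤ Y) : Y⁻¹ ≤ X⁻¹ := by
  obtain ⟨S, C, hS, rfl, rfl, hC⟩ := hX.exists_eq_conj_of_le hXY
  simpa [mul_inv_rev, ← mul_assoc, star_eq_conjTranspose, conjTranspose_nonsing_inv] using
    star_left_conjugate_le_conjugate (inv_le_one_of_one_le hC) (star S)⁻¹

lemma IsHermitian.det_add_smul_one {A : Matrix ι ι 𝕜} (hA : A.IsHermitian) (c : ℝ) :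
    (A + c • 1).det = ∏ i, ((hA.eigenvalues i + c : ℝ) : 𝕜) := by
  have : A + c • 1 = cfc (fun x : ℝ => x + c) A := by
    rw [cfc_add_const c (fun x => x) A, cfc_id' ℝ A, Algebra.algebraMap_eq_smul_one]
  rw [this, hA.cfc_eq]
  simp [IsHermitian.cfc, -Unitary.conjStarAlgAut_apply]

lemma IsHermitian.sum_log_div_eq_log_det {A : Matrix ι ι ℝ} (hA : A.IsHermitian) {c d : ℝ}
    (hcd : ∀ i, (hA.eigenvalues i + c) / (hA.eigenvalues i + d) ≠ 0) :
    ∑ i, Real.log ((hA.eigenvalues i + c) / (hA.eigenvalues i + d)) =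
      Real.log ((A + c • 1) * (A + d • 1)⁻¹).det := by
  rw [det_mul, det_nonsing_inv, Ring.inverse_eq_inv', hA.det_add_smul_one, hA.det_add_smul_one,
    ← div_eq_mul_inv]
  simp only [RCLike.ofReal_real_eq_id, id, ← Finset.prod_div_distrib]
  exact (Real.log_prod fun i _ => hcd i).symm

lemma add_smul_one_mul_inv_eq (A : Matrix ι ι 𝕜) (c d : ℝ) (h : IsUnit (A + d • 1).det) :
    (A + c • 1) * (A + d • 1)⁻¹ = 1 - (d - c) • (A + d • 1)⁻¹ := by
  rw [show A + c • 1 = (A + d • 1) - (d - c) • 1 by module, sub_mul, mul_nonsing_inv _ h,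
    smul_mul, one_mul]

lemma add_smul_one_mul_inv_le {A B : Matrix ι ι 𝕜} (hA : A.PosSemidef) (hAB : A ≤ B) {c d : ℝ}
    (hd : 0 < d) (hcd : c ≤ d) :
    (A + c • 1) * (A + d • 1)⁻¹ ≤ (B + c • 1) * (B + d • 1)⁻¹ := by
  have hB : B.PosSemidef := nonneg_iff_posSemidef.mp ((nonneg_iff_posSemidef.mpr hA).trans hAB)
  have hAd : (A + d • 1).PosDef := PosDef.posSemidef_add hA (PosDef.one.smul hd)
  have hBd : (B + d • 1).PosDef := PosDef.posSemidef_add hB (PosDef.one.smul hd)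
  have hinv : (B + d • 1)⁻¹ ≤ (A + d • 1)⁻¹ := hAd.inv_le_inv (by gcongr)
  rw [add_smul_one_mul_inv_eq A c d ((isUnit_iff_isUnit_det _).mp hAd.isUnit),
    add_smul_one_mul_inv_eq B c d ((isUnit_iff_isUnit_det _).mp hBd.isUnit)]
  have : 0 ≤ d - c := sub_nonneg.mpr hcd
  gcongr

lemma PosSemidef.posDef_add_smul_one_mul_inv {A : Matrix ι ι 𝕜} (hA : A.PosSemidef) {c d : ℝ}
    (hc : 0 < c) (hcd : c ≤ d) : ((A + c • 1) * (A + d • 1)⁻¹).PosDef := by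
  have hd : 0 < d := hc.trans_le hcd
  have hle := add_smul_one_mul_inv_le PosSemidef.zero (nonneg_iff_posSemidef.mpr hA) hd hcd
  have hinv : (d • 1 : Matrix ι ι 𝕜)⁻¹ = d⁻¹ • 1 :=
    inv_eq_right_inv (by simp [smul_smul, hd.ne'])
  rw [zero_add, zero_add, hinv, smul_mul_smul, one_mul, ← div_eq_mul_inv] at hle
  simpa using (PosDef.one.smul (div_pos hc hd)).add_posSemidef hle

end Matrix

theorem stmt_19 {n : ℕ} (a b : ℝ) (hab : a > b) (hb : 0 < b)
    (A B : Matrix (Fin n) (Fin n) ℝ) (hA : A.PosDef) (hB : B.PosDef) :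
    (∑ i, Real.log ((hA.1.eigenvalues i + a - b) / (hA.1.eigenvalues i + a + b)) =
      Real.log ((A + (a - b) • (1 : Matrix (Fin n) (Fin n) ℝ)) *
        (A + (a + b) • (1 : Matrix (Fin n) (Fin n) ℝ))⁻¹).det) ∧
    ((B - A).PosSemidef →
      ∑ i, Real.log ((hA.1.eigenvalues i + a - b) / (hA.1.eigenvalues i + a + b)) ≤
        ∑ i, Real.log ((hB.1.eigenvalues i + a - b) / (hB.1.eigenvalues i + a + b))) := by
  have hc : 0 < a - b := sub_pos.mpr hab
  have hcd : a - b ≤ a + b := by linarith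
  have hF : ∀ {M : Matrix (Fin n) (Fin n) ℝ} (hM : M.PosDef),
      ∑ i, Real.log ((hM.1.eigenvalues i + a - b) / (hM.1.eigenvalues i + a + b)) =
        Real.log ((M + (a - b) • 1) * (M + (a + b) • 1)⁻¹).det := fun hM => by
    simpa only [add_sub_assoc, add_assoc] using hM.1.sum_log_div_eq_log_det fun i =>
      (div_pos (by linarith [hM.eigenvalues_pos i]) (by linarith [hM.eigenvalues_pos i])).ne'
  refine ⟨hF hA, fun hAB => ?_⟩
  have hGA := hA.posSemidef.posDef_add_smul_one_mul_inv hc hcd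
  rw [hF hA, hF hB]
  exact Real.log_le_log hGA.det_pos
    (hGA.det_le_det (add_smul_one_mul_inv_le hA.posSemidef hAB (hc.trans_le hcd) hcd))
end
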